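/- Let D ∈ ℝ^{m×p} have unit ℓ₂-norm columns with μ_k(D) < 1/2. Let α° ∈ ℝ^p be supported on J with |J| ≤ k, s° = sign(α°), and let λ > 0 and x ∈ ℝ^m satisfy min_{j∈J}|α°_j| ≥ 2λ and ‖x − Dα°‖₂ < λ(1 − 2μ_k(D)). Then α̂_x(D|s°) is the unique minimizer over ℝ^p of α ↦ ½‖x − Dα‖₂² + λ‖α‖₁, and sign(α̂_x(D|s°)) = s°. -/

import Mathlib

open MeasureTheory Matrix Finset
open scoped ENNReal NNReal

noncomputable section

/-- squared ℓ² norm of a vector -/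
def l2sq {n : Type*} [Fintype n] (v : n → ℝ) : ℝ := ∑ i, v i ^ 2

/-- ℓ² norm of a vector -/
def l2 {n : Type*} [Fintype n] (v : n → ℝ) : ℝ := Real.sqrt (l2sq v)

/-- ℓ¹ norm of a vector -/
def l1 {n : Type*} [Fintype n] (v : n → ℝ) : ℝ := ∑ i, |v i|

/-- ℓ^∞ (sup) norm of a vector -/
def linf {n : Type*} (v : n → ℝ) : ℝ := sSup (Set.range fun i => |v i|)

/-- squared Frobenius norm -/
def frobSq {n q : Type*} [Fintype n] [Fintype q] (A : Matrix n q ℝ) : ℝ :=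
  ∑ i, ∑ j, A i j ^ 2

/-- Frobenius norm -/
def frob {n q : Type*} [Fintype n] [Fintype q] (A : Matrix n q ℝ) : ℝ :=
  Real.sqrt (frobSq A)

/-- spectral (operator ℓ²→ℓ²) norm -/
def spec {n q : Type*} [Fintype n] [Fintype q] (A : Matrix n q ℝ) : ℝ :=
  sSup {t : ℝ | ∃ x : q → ℝ, l2 x ≤ 1 ∧ t = l2 (A.mulVec x)}

/-- operator ℓ∞→ℓ∞ norm: max row sum of absolute values -/
def opInf {n q : Type*} [Fintype q] (A : Matrix n q ℝ) : ℝ :=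
  sSup (Set.range fun i => ∑ j, |A i j|)

/-- j-th column of a matrix -/
def col {m p : ℕ} (D : Matrix (Fin m) (Fin p) ℝ) (j : Fin p) : Fin m → ℝ :=
  fun i => D i j

/-- the oblique manifold: matrices with unit ℓ²-norm columns -/
def Oblique {m p : ℕ} (D : Matrix (Fin m) (Fin p) ℝ) : Prop :=
  ∀ j, l2sq (_root_.col D j) = 1

/-- cumulative coherence μ_k -/
def mu {m p : ℕ} (k : ℕ) (D : Matrix (Fin m) (Fin p) ℝ) : ℝ :=
  sSup {t : ℝ | ∃ J : Finset (Fin p), J.card ≤ k ∧ ∃ j, j ∉ J ∧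
    t = ∑ i ∈ J, |∑ r, D r i * D r j|}

/-- lower restricted isometry constant δ̲_k -/
def deltaLow {m p : ℕ} (k : ℕ) (D : Matrix (Fin m) (Fin p) ℝ) : ℝ :=
  sInf {δ : ℝ | 0 ≤ δ ∧ ∀ J : Finset (Fin p), J.card = k →
    ∀ z : Fin p → ℝ, (∀ i, i ∉ J → z i = 0) →
      (1 - δ) * l2sq z ≤ l2sq (D.mulVec z)}

/-- upper restricted isometry constant δ̄_k -/
def deltaUp {m p : ℕ} (k : ℕ) (D : Matrix (Fin m) (Fin p) ℝ) : ℝ :=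
  sInf {δ : ℝ | 0 ≤ δ ∧ ∀ J : Finset (Fin p), J.card = k →
    ∀ z : Fin p → ℝ, (∀ i, i ∉ J → z i = 0) →
      l2sq (D.mulVec z) ≤ (1 + δ) * l2sq z}

/-- submatrix D_J of the columns indexed by J -/
def colsub {m p : ℕ} (D : Matrix (Fin m) (Fin p) ℝ) (J : Finset (Fin p)) :
    Matrix (Fin m) J ℝ := fun i j => D i j.1

/-- Gram matrix D_Jᵀ D_J -/
def gram {m p : ℕ} (D : Matrix (Fin m) (Fin p) ℝ) (J : Finset (Fin p)) :
    Matrix J J ℝ := (colsub D J)ᵀ * colsub D J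

/-- Θ_J(D) = (D_Jᵀ D_J)⁻¹ -/
def theta {m p : ℕ} (D : Matrix (Fin m) (Fin p) ℝ) (J : Finset (Fin p)) :
    Matrix J J ℝ := (gram D J)⁻¹

/-- pseudo-inverse D_J⁺ = Θ_J D_Jᵀ -/
def pinv {m p : ℕ} (D : Matrix (Fin m) (Fin p) ℝ) (J : Finset (Fin p)) :
    Matrix J (Fin m) ℝ := theta D J * (colsub D J)ᵀ

/-- orthogonal projector P_J(D) = D_J Θ_J D_Jᵀ -/
def proj {m p : ℕ} (D : Matrix (Fin m) (Fin p) ℝ) (J : Finset (Fin p)) :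
    Matrix (Fin m) (Fin m) ℝ := colsub D J * pinv D J

/-- Lasso objective L_x(D, α) -/
def lasso {m p : ℕ} (lam : ℝ) (x : Fin m → ℝ) (D : Matrix (Fin m) (Fin p) ℝ)
    (a : Fin p → ℝ) : ℝ :=
  (1/2) * l2sq (fun i => x i - D.mulVec a i) + lam * l1 a

/-- f_x(D) = inf_α L_x(D, α) -/
def fobj {m p : ℕ} (lam : ℝ) (x : Fin m → ℝ) (D : Matrix (Fin m) (Fin p) ℝ) : ℝ :=
  ⨅ a : Fin p → ℝ, lasso lam x D a

/-- φ_x(D|s) for a sign vector s with support J -/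
def phi {m p : ℕ} (lam : ℝ) (x : Fin m → ℝ) (D : Matrix (Fin m) (Fin p) ℝ)
    (J : Finset (Fin p)) (s : Fin p → ℝ) : ℝ :=
  (1/2) * (l2sq x - ∑ a : J, ∑ b : J,
    ((colsub D J)ᵀ.mulVec x a - lam * s a.1) * theta D J a b
      * ((colsub D J)ᵀ.mulVec x b - lam * s b.1))

/-- α̂_x(D|s): the closed-form candidate minimizer with sign pattern s and support J -/
def alphaHat {m p : ℕ} (lam : ℝ) (x : Fin m → ℝ) (D : Matrix (Fin m) (Fin p) ℝ)
    (J : Finset (Fin p)) (s : Fin p → ℝ) : Fin p → ℝ :=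
  fun i => if h : i ∈ J then
    (pinv D J).mulVec x ⟨i, h⟩ - lam * (theta D J).mulVec (fun a => s a.1) ⟨i, h⟩
  else 0

/-- sign vector of a coefficient vector -/
def sgnv {p : ℕ} (a : Fin p → ℝ) : Fin p → ℝ := fun i => Real.sign (a i)

/-- the noisy signal x = D° α° + ε -/
def xsig {m p : ℕ} (Do : Matrix (Fin m) (Fin p) ℝ) (a : Fin p → ℝ) (e : Fin m → ℝ) :
    Fin m → ℝ := fun i => Do.mulVec a i + e i

/-- average over all subsets J ⊆ {1,…,p} of size k -/
def EJ {p : ℕ} (k : ℕ) (f : Finset (Fin p) → ℝ) : ℝ :=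
  ((p.choose k : ℝ))⁻¹ * ∑ S ∈ Finset.powersetCard k (Finset.univ : Finset (Fin p)), f S

/-- the constant C_min -/
def CminV {m p : ℕ} (k : ℕ) (Do : Matrix (Fin m) (Fin p) ℝ) (Ea2 Ea1 : ℝ) : ℝ :=
  24 * (Ea1 / Real.sqrt Ea2) ^ 2 * (spec Do + 1) * ((k : ℝ) / (p : ℝ)) *
    frob (Doᵀ * Do - (1 : Matrix (Fin p) (Fin p) ℝ))

/-- the constant C_max -/
def CmaxV {m p : ℕ} (k : ℕ) (Do : Matrix (Fin m) (Fin p) ℝ) (Ea1 Malpha : ℝ) : ℝ :=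
  (2/7) * (Ea1 / Malpha) * (1 - 2 * mu k Do)

/-- The Basic signal model (Assumption 1 together with the generative mechanism):
J is uniform over size-k supports, α° is supported on J with white coefficients and signs,
and the noise is decorrelated from the coefficients and white.  Conditional expectations given
J are expressed as integrals over the events {J = S}. -/
structure IsBasicModel {m p : ℕ} (k : ℕ) {Ω : Type*} [MeasurableSpace Ω] (μ : Measure Ω)
    (Jv : Ω → Finset (Fin p)) (av : Ω → Fin p → ℝ) (ev : Ω → Fin m → ℝ)
    (Ea2 Ea1 Ee2 : ℝ) : Prop where
  prob : IsProbabilityMeasure μ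
  measJ : ∀ S : Finset (Fin p), MeasurableSet {ω | Jv ω = S}
  measa : ∀ i, Measurable fun ω => av ω i
  mease : ∀ i, Measurable fun ω => ev ω i
  Ea2_pos : 0 < Ea2
  Ea1_pos : 0 < Ea1
  unif : ∀ S : Finset (Fin p), S.card = k →
    μ {ω | Jv ω = S} = ((p.choose k : ℝ≥0∞))⁻¹
  support : ∀ᵐ ω ∂μ, ∀ i, i ∉ Jv ω → av ω i = 0
  coeffWhite : ∀ S : Finset (Fin p), S.card = k → ∀ i ∈ S, ∀ j ∈ S,
    ∫ ω in {ω | Jv ω = S}, av ω i * av ω j ∂μ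
      = (if i = j then Ea2 else 0) * (μ {ω | Jv ω = S}).toReal
  signWhite : ∀ S : Finset (Fin p), S.card = k → ∀ i ∈ S, ∀ j ∈ S,
    ∫ ω in {ω | Jv ω = S}, Real.sign (av ω i) * Real.sign (av ω j) ∂μ
      = (if i = j then 1 else 0) * (μ {ω | Jv ω = S}).toReal
  coeffSign : ∀ S : Finset (Fin p), S.card = k → ∀ i ∈ S, ∀ j ∈ S,
    ∫ ω in {ω | Jv ω = S}, av ω i * Real.sign (av ω j) ∂μ
      = (if i = j then Ea1 else 0) * (μ {ω | Jv ω = S}).toReal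
  noiseCoeff : ∀ S : Finset (Fin p), S.card = k → ∀ i : Fin m, ∀ j ∈ S,
    ∫ ω in {ω | Jv ω = S}, ev ω i * av ω j ∂μ = 0
  noiseSign : ∀ S : Finset (Fin p), S.card = k → ∀ i : Fin m, ∀ j ∈ S,
    ∫ ω in {ω | Jv ω = S}, ev ω i * Real.sign (av ω j) ∂μ = 0
  noiseWhite : ∀ S : Finset (Fin p), S.card = k → ∀ i j : Fin m,
    ∫ ω in {ω | Jv ω = S}, ev ω i * ev ω j ∂μ
      = (if i = j then Ee2 else 0) * (μ {ω | Jv ω = S}).toReal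

/-- The Bounded signal model (Assumption 2): almost sure lower bound on nonzero coefficients,
and almost sure ℓ² bounds on the coefficient vector and the noise. -/
structure IsBoundedModel {m p : ℕ} {Ω : Type*} [MeasurableSpace Ω] (μ : Measure Ω)
    (Jv : Ω → Finset (Fin p)) (av : Ω → Fin p → ℝ) (ev : Ω → Fin m → ℝ)
    (alphaMin Malpha Meps : ℝ) : Prop where
  alphaMin_pos : 0 < alphaMin
  Malpha_pos : 0 < Malpha
  coeffFloor : ∀ᵐ ω ∂μ, ∀ i ∈ Jv ω, alphaMin ≤ |av ω i|
  coeffBound : ∀ᵐ ω ∂μ, l2 (av ω) ≤ Malpha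
  noiseBound : ∀ᵐ ω ∂μ, l2 (ev ω) ≤ Meps

end

/-! The Gram matrix `D_Jᵀ D_J` has unit diagonal and off-diagonal row sums at most `μ_k(D) < 1`,
so it is strictly diagonally dominant: `(1 - μ_k) ‖u‖_∞ ≤ ‖D_Jᵀ D_J u‖_∞`. On `J`, `α̂ - α°` solves
`D_Jᵀ D_J (α̂ - α°) = D_Jᵀ (x - Dα°) - λ s°`, whence `‖α̂ - α°‖_∞ < 2λ ≤ min_J |α°|` and the signs
agree. The residual `x - Dα̂` then correlates with the atoms as `λ s°_j` on `J` and by less than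
`λ` off `J` (noise term plus coherence times `2λ`). This dual certificate, together with the
injectivity of `D` on vectors supported on `J`, makes `α̂` the strict minimizer of the Lasso. -/

namespace Real

lemma sign_mul_self_eq_abs (t : ℝ) : sign t * t = |t| := by
  rcases lt_trichotomy t 0 with h | rfl | h
  · rw [sign_of_neg h, abs_of_neg h]; ring
  · simp
  · rw [sign_of_pos h, abs_of_pos h, one_mul]

lemma abs_sign_le_one (t : ℝ) : |sign t| ≤ 1 := by
  rcases sign_apply_eq t with h | h | h <;> simp [h]

lemma sign_add_of_abs_lt {t w : ℝ} (h : |w| < |t|) : sign (t + w) = sign t := by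
  rcases lt_trichotomy t 0 with ht | rfl | ht
  · rw [abs_of_neg ht] at h
    rw [sign_of_neg ht, sign_of_neg (by linarith [le_abs_self w])]
  · exact absurd h (by simp)
  · rw [abs_of_pos ht] at h
    rw [sign_of_pos ht, sign_of_pos (by linarith [neg_abs_le w])]

end Real

lemma one_sub_mul_abs_le_of_abs_mulVec_le {n : Type*} [Fintype n] [DecidableEq n]
    {A : Matrix n n ℝ} {μ c : ℝ} (hdiag : ∀ a, A a a = 1)
    (hoff : ∀ a, ∑ b ∈ univ.erase a, |A a b| ≤ μ) {u : n → ℝ}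
    (hu : ∀ a, |(A *ᵥ u) a| ≤ c) (a : n) : (1 - μ) * |u a| ≤ c := by
  obtain ⟨a₀, -, hmax⟩ := exists_max_image univ (fun b => |u b|) ⟨a, mem_univ a⟩
  have hsplit : (A *ᵥ u) a₀ = u a₀ + ∑ b ∈ univ.erase a₀, A a₀ b * u b := by
    rw [mulVec, dotProduct, ← add_sum_erase _ _ (mem_univ a₀), hdiag, one_mul]
  have hrest : |∑ b ∈ univ.erase a₀, A a₀ b * u b| ≤ μ * |u a₀| :=
    calc |∑ b ∈ univ.erase a₀, A a₀ b * u b|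
        ≤ ∑ b ∈ univ.erase a₀, |A a₀ b| * |u a₀| := by
          refine (abs_sum_le_sum_abs _ _).trans (sum_le_sum fun b _ => ?_)
          rw [abs_mul]
          exact mul_le_mul_of_nonneg_left (hmax b (mem_univ b)) (abs_nonneg _)
      _ ≤ μ * |u a₀| := by rw [← sum_mul]; gcongr; exact hoff a₀
  have hmain : (1 - μ) * |u a₀| ≤ c := by
    have htri := abs_sub ((A *ᵥ u) a₀) (∑ b ∈ univ.erase a₀, A a₀ b * u b)
    rw [hsplit, add_sub_cancel_right, ← hsplit] at htri
    linarith [hu a₀]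
  rcases le_or_gt 0 (1 - μ) with hμ | hμ
  · exact (mul_le_mul_of_nonneg_left (hmax a (mem_univ a)) hμ).trans hmain
  · nlinarith [abs_nonneg (u a), abs_nonneg ((A *ᵥ u) a), hu a]

section Coherence

variable {m p : ℕ} {D : Matrix (Fin m) (Fin p) ℝ}

lemma abs_vecMul_le_l2 (hD : Oblique D) (r : Fin m → ℝ) (j : Fin p) : |(r ᵥ* D) j| ≤ l2 r := by
  refine Real.abs_le_sqrt ?_
  calc (r ᵥ* D) j ^ 2 = (∑ i, r i * D i j) ^ 2 := rfl
    _ ≤ (∑ i, r i ^ 2) * ∑ i, D i j ^ 2 := sum_mul_sq_le_sq_mul_sq _ _ _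
    _ = l2sq r := by rw [show ∑ i, D i j ^ 2 = 1 from hD j, mul_one]; rfl

lemma transpose_mul_self_apply_self (hD : Oblique D) (j : Fin p) : (Dᵀ * D) j j = 1 := by
  simpa [mul_apply, sq, l2sq, _root_.col] using hD j

lemma abs_transpose_mul_self_apply_le_one (hD : Oblique D) (i j : Fin p) :
    |(Dᵀ * D) i j| ≤ 1 := by
  have hcol : l2 (fun r => D r i) = 1 := by
    rw [l2, show l2sq (fun r => D r i) = 1 from hD i, Real.sqrt_one]
  simpa [hcol, vecMul, dotProduct, mul_apply] using abs_vecMul_le_l2 hD (fun r => D r i) j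

lemma sum_abs_transpose_mul_self_le_mu (hD : Oblique D) {k : ℕ} {J : Finset (Fin p)}
    (hJ : #J ≤ k) {j : Fin p} (hj : j ∉ J) : ∑ i ∈ J, |(Dᵀ * D) i j| ≤ mu k D := by
  refine le_csSup ⟨k, ?_⟩ ⟨J, hJ, j, hj, by simp [mul_apply]⟩
  rintro t ⟨S, hS, j', -, rfl⟩
  calc ∑ i ∈ S, |∑ r, D r i * D r j'| ≤ ∑ _i ∈ S, (1 : ℝ) :=
        sum_le_sum fun i _ => by
          simpa [mul_apply] using abs_transpose_mul_self_apply_le_one hD i j'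
    _ ≤ k := by simpa using (Nat.cast_le (α := ℝ)).2 hS

lemma abs_vecMul_mulVec_le_mu (hD : Oblique D) {k : ℕ} {J : Finset (Fin p)} (hJ : #J ≤ k)
    {v : Fin p → ℝ} (hv : ∀ i ∉ J, v i = 0) {C : ℝ} (hC : 0 ≤ C) (hvC : ∀ i ∈ J, |v i| ≤ C)
    {j : Fin p} (hj : j ∉ J) : |((D *ᵥ v) ᵥ* D) j| ≤ C * mu k D := by
  have hsum : ((D *ᵥ v) ᵥ* D) j = ∑ i ∈ J, v i * (Dᵀ * D) i j := by
    rw [← vecMul_transpose, vecMul_vecMul, vecMul, dotProduct]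
    exact (sum_subset (subset_univ J) fun i _ hi => by rw [hv i hi, zero_mul]).symm
  calc |((D *ᵥ v) ᵥ* D) j| ≤ ∑ i ∈ J, |v i| * |(Dᵀ * D) i j| := by
        rw [hsum]; exact (abs_sum_le_sum_abs _ _).trans_eq (by simp_rw [abs_mul])
    _ ≤ ∑ i ∈ J, C * |(Dᵀ * D) i j| :=
        sum_le_sum fun i hi => mul_le_mul_of_nonneg_right (hvC i hi) (abs_nonneg _)
    _ ≤ C * mu k D := by
        rw [← mul_sum]
        exact mul_le_mul_of_nonneg_left (sum_abs_transpose_mul_self_le_mu hD hJ hj) hC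

end Coherence

section Gram

variable {m p : ℕ} {D : Matrix (Fin m) (Fin p) ℝ} {J : Finset (Fin p)}

lemma gram_apply (a b : J) : gram D J a b = (Dᵀ * D) a b := by
  simp [_root_.gram, colsub, mul_apply]

lemma vecMul_colsub_apply (r : Fin m → ℝ) (a : J) : (r ᵥ* colsub D J) a = (r ᵥ* D) a := rfl

lemma gram_mulVec (v : J → ℝ) : gram D J *ᵥ v = (colsub D J *ᵥ v) ᵥ* colsub D J := by
  rw [_root_.gram, ← mulVec_mulVec, mulVec_transpose]

lemma mulVec_eq_colsub_mulVec {v : Fin p → ℝ} (hv : ∀ i ∉ J, v i = 0) :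
    D *ᵥ v = colsub D J *ᵥ fun a => v a := by
  ext r
  simp only [mulVec, dotProduct, colsub]
  rw [sum_coe_sort J fun i => D r i * v i]
  exact (sum_subset (subset_univ J) fun i _ hi => by rw [hv i hi, mul_zero]).symm

lemma sum_abs_gram_erase_le_mu (hD : Oblique D) {k : ℕ} (hJ : #J ≤ k) (a : J) :
    ∑ b ∈ univ.erase a, |gram D J a b| ≤ mu k D := by
  have hsymm : ∀ i j, (Dᵀ * D) i j = (Dᵀ * D) j i := fun i j => by
    simp only [mul_apply, transpose_apply, mul_comm]
  have hcard : #(J.erase a) ≤ k := (card_erase_le).trans hJ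
  calc ∑ b ∈ univ.erase a, |gram D J a b|
      = ∑ i ∈ J, |(Dᵀ * D) i a| - |(Dᵀ * D) a a| := by
        simp_rw [sum_erase_eq_sub (mem_univ a), gram_apply, hsymm a]
        rw [sum_coe_sort J fun i => |(Dᵀ * D) i a|]
    _ = ∑ i ∈ J.erase a, |(Dᵀ * D) i a| := (sum_erase_eq_sub a.2).symm
    _ ≤ mu k D := sum_abs_transpose_mul_self_le_mu hD hcard (notMem_erase _ _)

lemma one_sub_mu_mul_abs_le_of_abs_gram_mulVec_le (hD : Oblique D) {k : ℕ} (hJ : #J ≤ k)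
    {u : J → ℝ} {c : ℝ} (hu : ∀ a, |(gram D J *ᵥ u) a| ≤ c) (a : J) :
    (1 - mu k D) * |u a| ≤ c :=
  one_sub_mul_abs_le_of_abs_mulVec_le
    (fun a => by rw [gram_apply]; exact transpose_mul_self_apply_self hD a)
    (sum_abs_gram_erase_le_mu hD hJ) hu a

lemma eq_zero_of_gram_mulVec_eq_zero (hD : Oblique D) {k : ℕ} (hmu : mu k D < 1) (hJ : #J ≤ k)
    {u : J → ℝ} (hu : gram D J *ᵥ u = 0) : u = 0 := by
  ext a
  have h := one_sub_mu_mul_abs_le_of_abs_gram_mulVec_le hD hJ (u := u) (c := 0) (by simp [hu]) a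
  have h' : |u a| ≤ 0 := nonpos_of_mul_nonpos_right h (by linarith)
  simpa using h'

lemma isUnit_det_gram (hD : Oblique D) {k : ℕ} (hmu : mu k D < 1) (hJ : #J ≤ k) :
    IsUnit (gram D J).det := by
  refine isUnit_iff_ne_zero.2 fun hdet => ?_
  obtain ⟨u, hu0, hu⟩ := exists_mulVec_eq_zero_iff.2 hdet
  exact hu0 (eq_zero_of_gram_mulVec_eq_zero hD hmu hJ hu)

lemma eq_zero_of_mulVec_eq_zero (hD : Oblique D) {k : ℕ} (hmu : mu k D < 1) (hJ : #J ≤ k)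
    {v : Fin p → ℝ} (hv : ∀ i ∉ J, v i = 0) (h0 : D *ᵥ v = 0) : v = 0 := by
  have hvJ := eq_zero_of_gram_mulVec_eq_zero hD hmu hJ (u := fun a : J => v a)
    (by rw [gram_mulVec, ← mulVec_eq_colsub_mulVec hv, h0, zero_vecMul])
  ext i
  by_cases hi : i ∈ J
  · exact congrFun hvJ ⟨i, hi⟩
  · exact hv i hi

lemma gram_mulVec_alphaHat (hG : IsUnit (gram D J).det) (lam : ℝ) (x : Fin m → ℝ)
    (s : Fin p → ℝ) :
    gram D J *ᵥ (fun a => alphaHat lam x D J s a) = fun a : J => (x ᵥ* D) a - lam * s a := by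
  have hform : (fun a : J => alphaHat lam x D J s a)
      = theta D J *ᵥ ((colsub D J)ᵀ *ᵥ x - lam • fun a : J => s a) := by
    ext a
    simp [alphaHat, pinv, mulVec_sub, mulVec_smul, ← mulVec_mulVec]
  rw [hform, mulVec_mulVec, theta, mul_nonsing_inv _ hG, one_mulVec, mulVec_transpose]
  rfl

end Gram

section Lasso

variable {m p : ℕ} {D : Matrix (Fin m) (Fin p) ℝ} {lam : ℝ} {x : Fin m → ℝ}

lemma l2sq_sub {n : Type*} [Fintype n] (u v : n → ℝ) :
    l2sq (u - v) = l2sq u - 2 * (u ⬝ᵥ v) + l2sq v := by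
  simp only [l2sq, dotProduct, Pi.sub_apply, sub_sq, mul_sum, sum_add_distrib, sum_sub_distrib,
    mul_assoc]

lemma l2sq_pos {n : Type*} [Fintype n] {v : n → ℝ} (hv : v ≠ 0) : 0 < l2sq v := by
  have h : l2sq v = v ⬝ᵥ v := by simp [l2sq, dotProduct, sq]
  rw [h]
  exact lt_of_le_of_ne (sum_nonneg fun i _ => mul_self_nonneg (v i))
    (fun h0 => hv (dotProduct_self_eq_zero.1 h0.symm))

lemma lasso_sub_lasso (a b : Fin p → ℝ) :
    lasso lam x D b - lasso lam x D a
      = lam * (l1 b - l1 a) - ((x - D *ᵥ a) ᵥ* D) ⬝ᵥ (b - a) + l2sq (D *ᵥ (b - a)) / 2 := by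
  have hres : (fun i => x i - (D *ᵥ b) i) = (x - D *ᵥ a) - D *ᵥ (b - a) := by
    rw [mulVec_sub]; ext i; simp only [Pi.sub_apply]; ring
  rw [lasso, lasso, hres, l2sq_sub, dotProduct_mulVec]
  simp only [l2sq, Pi.sub_apply]
  ring

lemma lasso_lt_of_certificate (hlam : 0 ≤ lam) {J : Finset (Fin p)} {a : Fin p → ℝ}
    (hon : ∀ j ∈ J, ((x - D *ᵥ a) ᵥ* D) j = lam * Real.sign (a j))
    (hsupp : ∀ j ∉ J, a j = 0) (hoff : ∀ j ∉ J, |((x - D *ᵥ a) ᵥ* D) j| < lam)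
    (hinj : ∀ v : Fin p → ℝ, (∀ j ∉ J, v j = 0) → D *ᵥ v = 0 → v = 0)
    {b : Fin p → ℝ} (hb : b ≠ a) : lasso lam x D a < lasso lam x D b := by
  set c := (x - D *ᵥ a) ᵥ* D with hc_def
  have hca : ∀ j, c j * a j = lam * |a j| := fun j => by
    by_cases hj : j ∈ J
    · rw [hon j hj, mul_assoc, Real.sign_mul_self_eq_abs]
    · simp [hsupp j hj]
  have hc : ∀ j, |c j| ≤ lam := fun j => by
    by_cases hj : j ∈ J
    · rw [hon j hj, abs_mul, abs_of_nonneg hlam]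
      exact mul_le_of_le_one_right hlam (Real.abs_sign_le_one _)
    · exact (hoff j hj).le
  have hterm : ∀ j, (lam - |c j|) * |b j| ≤ lam * |b j| - c j * b j := fun j => by
    have := (le_abs_self (c j * b j)).trans_eq (abs_mul (c j) (b j))
    linarith
  have hgap : lasso lam x D b - lasso lam x D a
      = ∑ j, (lam * |b j| - c j * b j) + l2sq (D *ᵥ (b - a)) / 2 := by
    have hca_sum : c ⬝ᵥ a = lam * l1 a := by simp only [dotProduct, hca, l1, mul_sum]
    rw [lasso_sub_lasso, ← hc_def, dotProduct_sub, hca_sum, sum_sub_distrib, ← mul_sum, l1,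
      dotProduct]
    ring
  have hterm_nonneg : ∀ j, 0 ≤ lam * |b j| - c j * b j := fun j =>
    (mul_nonneg (sub_nonneg.2 (hc j)) (abs_nonneg _)).trans (hterm j)
  have hquad : 0 ≤ l2sq (D *ᵥ (b - a)) := sum_nonneg fun i _ => sq_nonneg _
  by_cases hbJ : ∀ j ∉ J, b j = 0
  · have hδ : D *ᵥ (b - a) ≠ 0 := fun h0 =>
      sub_ne_zero.2 hb (hinj _ (fun j hj => by simp [hbJ j hj, hsupp j hj]) h0)
    have := l2sq_pos hδ
    linarith [sum_nonneg fun j (_ : j ∈ univ) => hterm_nonneg j]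
  · push Not at hbJ
    obtain ⟨j₀, hj₀, hbj₀⟩ := hbJ
    have hpos : 0 < lam * |b j₀| - c j₀ * b j₀ :=
      (mul_pos (sub_pos.2 (hoff j₀ hj₀)) (abs_pos.2 hbj₀)).trans_le (hterm j₀)
    have := sum_pos' (fun j (_ : j ∈ univ) => hterm_nonneg j) ⟨j₀, mem_univ _, hpos⟩
    linarith

end Lasso

section AlphaHat

variable {m p k : ℕ} {D : Matrix (Fin m) (Fin p) ℝ} {J : Finset (Fin p)} {lam : ℝ}
  {x : Fin m → ℝ} {s : Fin p → ℝ}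

lemma alphaHat_of_notMem {i : Fin p} (hi : i ∉ J) : alphaHat lam x D J s i = 0 := dif_neg hi

lemma vecMul_sub_mulVec_alphaHat_of_mem (hG : IsUnit (gram D J).det) {j : Fin p} (hj : j ∈ J) :
    ((x - D *ᵥ alphaHat lam x D J s) ᵥ* D) j = lam * s j := by
  have h := congrFun (gram_mulVec_alphaHat hG lam x s) ⟨j, hj⟩
  rw [gram_mulVec, ← mulVec_eq_colsub_mulVec fun i hi => alphaHat_of_notMem hi,
    vecMul_colsub_apply] at h
  rw [sub_vecMul, Pi.sub_apply, h]
  ring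

variable {αo : Fin p → ℝ}

lemma abs_alphaHat_sub_lt (hD : Oblique D) (hmu : mu k D < 1) (hJ : #J ≤ k)
    (hsupp : ∀ i ∉ J, αo i = 0) (hlam : 0 ≤ lam) (hs : ∀ i, |s i| ≤ 1)
    (hres : l2 (x - D *ᵥ αo) < lam * (1 - 2 * mu k D)) {i : Fin p} (hi : i ∈ J) :
    |alphaHat lam x D J s i - αo i| < 2 * lam := by
  have hG := isUnit_det_gram hD hmu hJ
  have hsys : gram D J *ᵥ (fun a : J => alphaHat lam x D J s a - αo a)
      = fun a : J => ((x - D *ᵥ αo) ᵥ* D) a - lam * s a := by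
    rw [show (fun a : J => alphaHat lam x D J s a - αo a)
        = (fun a : J => alphaHat lam x D J s a) - fun a : J => αo a from rfl,
      mulVec_sub, gram_mulVec_alphaHat hG, gram_mulVec, ← mulVec_eq_colsub_mulVec hsupp]
    ext a
    simp only [Pi.sub_apply, sub_vecMul, vecMul_colsub_apply]
    ring
  have hbound : (1 - mu k D) * |alphaHat lam x D J s i - αo i| ≤ l2 (x - D *ᵥ αo) + lam := by
    refine one_sub_mu_mul_abs_le_of_abs_gram_mulVec_le hD hJ
      (u := fun a : J => alphaHat lam x D J s a - αo a) (fun a => ?_) ⟨i, hi⟩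
    rw [hsys]
    calc _ ≤ |((x - D *ᵥ αo) ᵥ* D) a| + |lam * s a| := abs_sub _ _
      _ ≤ l2 (x - D *ᵥ αo) + lam := by
        refine add_le_add (abs_vecMul_le_l2 hD _ _) ?_
        rw [abs_mul, abs_of_nonneg hlam]
        exact mul_le_of_le_one_right hlam (hs _)
  exact lt_of_mul_lt_mul_left (hbound.trans_lt (by linarith)) (by linarith)

lemma abs_vecMul_sub_mulVec_alphaHat_lt (hD : Oblique D) (hmu : mu k D < 1) (hJ : #J ≤ k)
    (hsupp : ∀ i ∉ J, αo i = 0) (hlam : 0 ≤ lam) (hs : ∀ i, |s i| ≤ 1)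
    (hres : l2 (x - D *ᵥ αo) < lam * (1 - 2 * mu k D)) {j : Fin p} (hj : j ∉ J) :
    |((x - D *ᵥ alphaHat lam x D J s) ᵥ* D) j| < lam := by
  have hsplit : x - D *ᵥ alphaHat lam x D J s
      = (x - D *ᵥ αo) - D *ᵥ (alphaHat lam x D J s - αo) := by
    rw [mulVec_sub]; abel
  have hnoise := abs_vecMul_le_l2 hD (x - D *ᵥ αo) j
  have hcross := abs_vecMul_mulVec_le_mu hD hJ (v := alphaHat lam x D J s - αo)
    (fun i hi => by simp [alphaHat_of_notMem hi, hsupp i hi]) (by linarith)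
    (fun i hi => (abs_alphaHat_sub_lt hD hmu hJ hsupp hlam hs hres hi).le) hj
  rw [hsplit, sub_vecMul, Pi.sub_apply]
  calc _ ≤ _ := abs_sub _ _
    _ < lam := by linarith

end AlphaHat

/-- Lemma (robust sign recovery): under coherence μ_k(D) < 1/2, coefficient floor 2λ and small
residual, α̂_x(D|s°) is the unique Lasso minimizer and recovers the sign pattern of α°. -/
theorem stmt13 {m p k : ℕ} (D : Matrix (Fin m) (Fin p) ℝ) (hD : Oblique D)
    (hmu : mu k D < 1/2) (J : Finset (Fin p)) (hJ : J.card ≤ k)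
    (αo : Fin p → ℝ) (hsupp : ∀ i, i ∉ J → αo i = 0)
    (lam : ℝ) (hlam : 0 < lam)
    (hfloor : ∀ i ∈ J, 2 * lam ≤ |αo i|)
    (x : Fin m → ℝ) (hres : l2 (fun i => x i - D.mulVec αo i) < lam * (1 - 2 * mu k D)) :
    (∀ a : Fin p → ℝ, a ≠ alphaHat lam x D J (sgnv αo) →
      lasso lam x D (alphaHat lam x D J (sgnv αo)) < lasso lam x D a) ∧
    (∀ i, Real.sign (alphaHat lam x D J (sgnv αo) i) = Real.sign (αo i)) := by
  have hmu1 : mu k D < 1 := by linarith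
  have hs : ∀ i, |sgnv αo i| ≤ 1 := fun i => Real.abs_sign_le_one (αo i)
  have hsign : ∀ i, Real.sign (alphaHat lam x D J (sgnv αo) i) = Real.sign (αo i) := by
    intro i
    by_cases hi : i ∈ J
    · have hclose := abs_alphaHat_sub_lt hD hmu1 hJ hsupp hlam.le hs hres hi
      simpa using Real.sign_add_of_abs_lt (t := αo i)
        (w := alphaHat lam x D J (sgnv αo) i - αo i) (by linarith [hfloor i hi])
    · rw [alphaHat_of_notMem hi, hsupp i hi]
  refine ⟨fun a ha => lasso_lt_of_certificate hlam.le (fun j hj => ?_)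
    (fun i hi => alphaHat_of_notMem hi)
    (fun j hj => abs_vecMul_sub_mulVec_alphaHat_lt hD hmu1 hJ hsupp hlam.le hs hres hj)
    (fun v hv h0 => eq_zero_of_mulVec_eq_zero hD hmu1 hJ hv h0) ha, hsign⟩
  rw [vecMul_sub_mulVec_alphaHat_of_mem (isUnit_det_gram hD hmu1 hJ) hj, hsign]
  rfl
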